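/- arXiv:1901.00058 — 6 statements merged into one kernel-verified Lean document; each statement's English description precedes it below -/
import Mathlib

section
/- Let h : (0,∞) → ℝ satisfy h(x) = h(1/x) for all x ∈ (0,∞). Then h is convex on (0,∞) if and only if the restriction of h to [1,∞) is convex and nondecreasing. -/
open Matrix MeasureTheory Set

noncomputable section

/-- The space of real 2×2 matrices. -/
abbrev Mat2 := Matrix (Fin 2) (Fin 2) ℝ

/-- Squared Frobenius norm of a 2×2 matrix. -/
def frobSq (F : Mat2) : ℝ := ∑ i, ∑ j, (F i j) ^ 2

/-- The special orthogonal group SO(2). -/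
def SO2 (R : Mat2) : Prop := R.transpose * R = 1 ∧ R.det = 1

/-- The conformal special orthogonal group CSO(2) = (0,∞)·SO(2). -/
def CSO2 (A : Mat2) : Prop := ∃ a : ℝ, 0 < a ∧ ∃ R : Mat2, SO2 R ∧ A = a • R

/-- Conformal invariance of an energy `W : GL⁺(2) → ℝ`. -/
def ConfInv (W : Mat2 → ℝ) : Prop :=
  ∀ F : Mat2, 0 < F.det → ∀ A B : Mat2, CSO2 A → CSO2 B → W (A * F * B) = W F

/-- `l1, l2` are the singular values of `F` (in either order): they are positive and their
product and sum of squares agree with `det F` and the squared Frobenius norm of `F`. -/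
def SingVals (F : Mat2) (l1 l2 : ℝ) : Prop :=
  0 < l1 ∧ 0 < l2 ∧ l1 * l2 = F.det ∧ l1 ^ 2 + l2 ^ 2 = frobSq F

/-- `l1 ≥ l2` are the ordered singular values of `F`. -/
def OrdSingVals (F : Mat2) (l1 l2 : ℝ) : Prop := SingVals F l1 l2 ∧ l2 ≤ l1

/-- The larger singular value of a 2×2 matrix with positive determinant. -/
def sv1 (F : Mat2) : ℝ :=
  Real.sqrt ((frobSq F + Real.sqrt (frobSq F ^ 2 - 4 * F.det ^ 2)) / 2)

/-- The smaller singular value of a 2×2 matrix with positive determinant. -/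
def sv2 (F : Mat2) : ℝ :=
  Real.sqrt ((frobSq F - Real.sqrt (frobSq F ^ 2 - 4 * F.det ^ 2)) / 2)

/-- The distortion 𝕂(F) = ‖F‖²/(2 det F). -/
def Kdist (F : Mat2) : ℝ := frobSq F / (2 * F.det)

/-- Rank-one convexity of an energy on GL⁺(2). -/
def RankOneConvex (W : Mat2 → ℝ) : Prop :=
  ∀ F : Mat2, 0 < F.det → ∀ H : Mat2, H.rank = 1 → 0 < (F + H).det →
    ∀ t : ℝ, 0 ≤ t → t ≤ 1 → W (F + t • H) ≤ (1 - t) * W F + t * W (F + H)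

/-- The gradient (Jacobian matrix) of a map ϑ : ℝ² → ℝ². -/
def gradMat (ϑ : (Fin 2 → ℝ) → (Fin 2 → ℝ)) (x : Fin 2 → ℝ) : Mat2 :=
  Matrix.of fun i j => fderiv ℝ ϑ x (Pi.single j 1) i

/-- Quasiconvexity of an energy on GL⁺(2). -/
def Quasiconvex2 (W : Mat2 → ℝ) : Prop :=
  ∀ Ω : Set (Fin 2 → ℝ), IsOpen Ω → Bornology.IsBounded Ω →
    ∀ F₀ : Mat2, 0 < F₀.det →
    ∀ ϑ : (Fin 2 → ℝ) → (Fin 2 → ℝ), ContDiff ℝ (⊤ : ℕ∞) ϑ → HasCompactSupport ϑ →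
      tsupport ϑ ⊆ Ω → (∀ x ∈ Ω, 0 < (F₀ + gradMat ϑ x).det) →
      W F₀ * (volume Ω).toReal ≤ ∫ x in Ω, W (F₀ + gradMat ϑ x)

/-- Polyconvexity of an energy on GL⁺(2): `W(F) = P(F, det F)` for some convex
function `P : ℝ^{2×2} × ℝ → ℝ ∪ {+∞}`. -/
def Polyconvex (W : Mat2 → ℝ) : Prop :=
  ∃ P : Mat2 × ℝ → EReal,
    (∀ X Y : Mat2 × ℝ, ∀ t : ℝ, 0 ≤ t → t ≤ 1 →
      P (t • X + (1 - t) • Y) ≤ (t : ℝ) * P X + ((1 - t : ℝ) : EReal) * P Y) ∧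
    (∀ F : Mat2, 0 < F.det → (W F : EReal) = P (F, F.det))

/-- The rank-one convex envelope of `W` on GL⁺(2). -/
def RWenv (W : Mat2 → ℝ) (F : Mat2) : ℝ :=
  sSup {y | ∃ w : Mat2 → ℝ, RankOneConvex w ∧ (∀ X : Mat2, 0 < X.det → w X ≤ W X) ∧ y = w F}

/-- The quasiconvex envelope of `W` on GL⁺(2). -/
def QWenv (W : Mat2 → ℝ) (F : Mat2) : ℝ :=
  sSup {y | ∃ w : Mat2 → ℝ, Quasiconvex2 w ∧ (∀ X : Mat2, 0 < X.det → w X ≤ W X) ∧ y = w F}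

/-- The polyconvex envelope of `W` on GL⁺(2). -/
def PWenv (W : Mat2 → ℝ) (F : Mat2) : ℝ :=
  sSup {y | ∃ w : Mat2 → ℝ, Polyconvex w ∧ (∀ X : Mat2, 0 < X.det → w X ≤ W X) ∧ y = w F}

/-- The monotone-convex envelope of `h : [1,∞) → ℝ`. -/
def CmEnv (h : ℝ → ℝ) (t : ℝ) : ℝ :=
  sSup {y | ∃ p : ℝ → ℝ, ConvexOn ℝ (Set.Ici (1 : ℝ)) p ∧ MonotoneOn p (Set.Ici (1 : ℝ)) ∧
    (∀ s : ℝ, 1 ≤ s → p s ≤ h s) ∧ y = p t}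

/-- The convex envelope of `h : [1,∞) → ℝ`. -/
def CEnv (h : ℝ → ℝ) (t : ℝ) : ℝ :=
  sSup {y | ∃ p : ℝ → ℝ, ConvexOn ℝ (Set.Ici (1 : ℝ)) p ∧
    (∀ s : ℝ, 1 ≤ s → p s ≤ h s) ∧ y = p t}

/-- The special orthogonal group SO(n). -/
def SOnN {n : ℕ} (R : Matrix (Fin n) (Fin n) ℝ) : Prop := R.transpose * R = 1 ∧ R.det = 1

/-- The conformal special orthogonal group CSO(n) = (0,∞)·SO(n). -/
def CSOnN {n : ℕ} (A : Matrix (Fin n) (Fin n) ℝ) : Prop :=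
  ∃ a : ℝ, 0 < a ∧ ∃ R : Matrix (Fin n) (Fin n) ℝ, SOnN R ∧ A = a • R

/-- Conformal invariance of an energy `W : GL⁺(n) → ℝ`. -/
def ConfInvN {n : ℕ} (W : Matrix (Fin n) (Fin n) ℝ → ℝ) : Prop :=
  ∀ F : Matrix (Fin n) (Fin n) ℝ, 0 < F.det →
    ∀ A B : Matrix (Fin n) (Fin n) ℝ, CSOnN A → CSOnN B → W (A * F * B) = W F

/-- Rank-one convexity of an energy on GL⁺(n). -/
def RankOneConvexN {n : ℕ} (W : Matrix (Fin n) (Fin n) ℝ → ℝ) : Prop :=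
  ∀ F : Matrix (Fin n) (Fin n) ℝ, 0 < F.det →
    ∀ H : Matrix (Fin n) (Fin n) ℝ, H.rank = 1 → 0 < (F + H).det →
    ∀ t : ℝ, 0 ≤ t → t ≤ 1 → W (F + t • H) ≤ (1 - t) * W F + t * W (F + H)

/-- The gradient (Jacobian matrix) of a map ϑ : ℝⁿ → ℝⁿ. -/
def gradMatN {n : ℕ} (ϑ : (Fin n → ℝ) → (Fin n → ℝ)) (x : Fin n → ℝ) :
    Matrix (Fin n) (Fin n) ℝ :=
  Matrix.of fun i j => fderiv ℝ ϑ x (Pi.single j 1) i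

/-- Quasiconvexity of an energy on GL⁺(n). -/
def QuasiconvexN {n : ℕ} (W : Matrix (Fin n) (Fin n) ℝ → ℝ) : Prop :=
  ∀ Ω : Set (Fin n → ℝ), IsOpen Ω → Bornology.IsBounded Ω →
    ∀ F₀ : Matrix (Fin n) (Fin n) ℝ, 0 < F₀.det →
    ∀ ϑ : (Fin n → ℝ) → (Fin n → ℝ), ContDiff ℝ (⊤ : ℕ∞) ϑ → HasCompactSupport ϑ →
      tsupport ϑ ⊆ Ω → (∀ x ∈ Ω, 0 < (F₀ + gradMatN ϑ x).det) →
      W F₀ * (volume Ω).toReal ≤ ∫ x in Ω, W (F₀ + gradMatN ϑ x)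

/-- The rank-one convex envelope of `W` on GL⁺(n). -/
def RWenvN {n : ℕ} (W : Matrix (Fin n) (Fin n) ℝ → ℝ) (F : Matrix (Fin n) (Fin n) ℝ) : ℝ :=
  sSup {y | ∃ w : Matrix (Fin n) (Fin n) ℝ → ℝ, RankOneConvexN w ∧
    (∀ X : Matrix (Fin n) (Fin n) ℝ, 0 < X.det → w X ≤ W X) ∧ y = w F}

/-- The quasiconvex envelope of `W` on GL⁺(n). -/
def QWenvN {n : ℕ} (W : Matrix (Fin n) (Fin n) ℝ → ℝ) (F : Matrix (Fin n) (Fin n) ℝ) : ℝ :=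
  sSup {y | ∃ w : Matrix (Fin n) (Fin n) ℝ → ℝ, QuasiconvexN w ∧
    (∀ X : Matrix (Fin n) (Fin n) ℝ, 0 < X.det → w X ≤ W X) ∧ y = w F}

end

/-! The map `m x = max x x⁻¹` is convex on `(0,∞)`, takes values in `[1,∞)`, and the symmetry
`h x = h x⁻¹` says exactly that `h = h ∘ m` on `(0,∞)`; so if `h` is convex and nondecreasing on
`[1,∞)`, it is convex on `(0,∞)` as a nondecreasing convex function of a convex function.
Conversely, for `1 ≤ x ≤ y` the point `x` lies between `y⁻¹` and `y`, so convexity gives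
`h x ≤ max (h y⁻¹) (h y) = h y`. -/

theorem ConvexOn.comp_of_mapsTo {𝕜 E α β : Type*} [Semiring 𝕜] [PartialOrder 𝕜]
    [AddCommMonoid E] [AddCommMonoid α] [PartialOrder α] [AddCommMonoid β] [PartialOrder β]
    [SMul 𝕜 E] [SMul 𝕜 α] [SMul 𝕜 β] {s : Set E} {t : Set β} {f : E → β} {g : β → α}
    (hg : ConvexOn 𝕜 t g) (hf : ConvexOn 𝕜 s f) (hg' : MonotoneOn g t) (hst : MapsTo f s t) :
    ConvexOn 𝕜 s (g ∘ f) :=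
  ⟨hf.1, fun _ hx _ hy _ _ ha hb hab =>
    (hg' (hst (hf.1 hx hy ha hb hab)) (hg.1 (hst hx) (hst hy) ha hb hab)
      (hf.2 hx hy ha hb hab)).trans (hg.2 (hst hx) (hst hy) ha hb hab)⟩

theorem convexOn_max_self_inv : ConvexOn ℝ (Ioi 0) fun x : ℝ => max x x⁻¹ := by
  have hinv : ConvexOn ℝ (Ioi 0) fun x : ℝ => x⁻¹ := by simpa using convexOn_zpow (𝕜 := ℝ) (-1)
  exact (convexOn_id (convex_Ioi 0)).sup hinv

theorem one_le_max_self_inv {x : ℝ} (hx : 0 < x) : 1 ≤ max x x⁻¹ := by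
  rcases le_total 1 x with hle | hle
  · exact le_max_of_le_left hle
  · exact le_max_of_le_right ((one_le_inv₀ hx).mpr hle)

theorem eqOn_comp_max_self_inv {h : ℝ → ℝ} (hsym : ∀ x : ℝ, 0 < x → h x = h x⁻¹) :
    EqOn (h ∘ fun x => max x x⁻¹) h (Ioi 0) := by
  intro x (hx : 0 < x)
  rcases le_total 1 x with hle | hle
  · simp only [Function.comp_apply, max_eq_left ((inv_le_one_of_one_le₀ hle).trans hle)]
  · simp only [Function.comp_apply, max_eq_right (hle.trans ((one_le_inv₀ hx).mpr hle))]
    exact (hsym x hx).symm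

theorem ConvexOn.monotoneOn_Ici_one_of_inv {h : ℝ → ℝ} (hc : ConvexOn ℝ (Ioi 0) h)
    (hsym : ∀ x : ℝ, 0 < x → h x = h x⁻¹) : MonotoneOn h (Ici 1) := by
  intro x (hx : 1 ≤ x) y (hy : 1 ≤ y) hxy
  have hy0 : 0 < y := one_pos.trans_le hy
  have hyx : y⁻¹ ≤ x := (inv_le_one_of_one_le₀ hy).trans hx
  simpa [← hsym y hy0] using
    hc.le_max_of_mem_Icc (inv_pos.2 hy0 : y⁻¹ ∈ Ioi 0) (hy0 : y ∈ Ioi 0) ⟨hyx, hxy⟩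

/-- A function `h : (0,∞) → ℝ` with `h(x) = h(1/x)` is convex on `(0,∞)`
if and only if it is convex and nondecreasing on `[1,∞)`. -/
theorem convex_iff_convex_monotone_on_Ici (h : ℝ → ℝ)
    (hsym : ∀ x : ℝ, 0 < x → h x = h x⁻¹) :
    ConvexOn ℝ (Set.Ioi (0 : ℝ)) h ↔
      ConvexOn ℝ (Set.Ici (1 : ℝ)) h ∧ MonotoneOn h (Set.Ici (1 : ℝ)) := by
  constructor
  · intro hc
    exact ⟨hc.subset (fun x hx => mem_Ioi.2 (one_pos.trans_le hx)) (convex_Ici 1),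
      hc.monotoneOn_Ici_one_of_inv hsym⟩
  · rintro ⟨hconv, hmono⟩
    have hcomp := hconv.comp_of_mapsTo convexOn_max_self_inv hmono
      fun x hx => one_le_max_self_inv hx
    exact hcomp.congr (eqOn_comp_max_self_inv hsym)
end

section
/- Let Ψ : [1,∞) → ℝ be twice continuously differentiable and define h : (0,∞) → ℝ by h(t) := Ψ((t + 1/t)/2). Then h is convex on (0,∞) if and only if (x² − 1)·(x + √(x² − 1))·Ψ''(x) + Ψ'(x) ≥ 0 for all x ∈ (1,∞). (By the characterization of generalized convexity of conformally invariant planar energies, this inequality therefore characterizes rank-one convexity, quasiconvexity and polyconvexity of the energy W(F) = Ψ(𝕂(F)) on GL⁺(2).) -/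
open Matrix MeasureTheory Set

/-! With `x = (t + t⁻¹)/2`, the chain rule gives `t³ h''(t) = E(x, t)`, where
`E(x, t) = (x² − 1) t Ψ''(x) + Ψ'(x)`, and the criterion reads `E(x, x + √(x² − 1)) ≥ 0`.
Since `t ↦ x + √(x² − 1)` inverts `t ↦ (t + t⁻¹)/2` on `[1, ∞)`, convexity of `h` gives the
criterion at once. Conversely, the criterion makes `h'` nondecreasing on `[1, ∞)`, and `h'(1) = 0`
then forces `Ψ' ≥ 0`. As `E(x, ·)` is affine, nonnegative at `0` (where it is `Ψ'(x)`) and at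
`x + √(x² − 1)`, which bounds every `t > 0` with `(t + t⁻¹)/2 = x`, we get `h'' ≥ 0` on `(0, ∞)`. -/

open Topology

lemma convexOn_iff_forall_nonneg_of_hasDerivAt2 {s : Set ℝ} (hs : Convex ℝ s) (hso : IsOpen s)
    {f f' f'' : ℝ → ℝ} (hf' : ∀ x ∈ s, HasDerivAt f (f' x) x)
    (hf'' : ∀ x ∈ s, HasDerivAt f' (f'' x) x) :
    ConvexOn ℝ s f ↔ ∀ x ∈ s, 0 ≤ f'' x := by
  constructor
  · intro hf x hx
    have hderiv : EqOn (deriv f) f' s := deriv_eqOn hso fun y hy => (hf' y hy).hasDerivWithinAt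
    have hmono : MonotoneOn f' s :=
      (hf.monotoneOn_deriv fun y hy => (hf' y hy).differentiableAt).congr hderiv
    exact hmono.derivWithin_nonneg.trans_eq
      ((hf'' x hx).hasDerivWithinAt.derivWithin (hso.uniqueDiffWithinAt hx))
  · intro hf''₀
    refine convexOn_of_hasDerivWithinAt2_nonneg (f' := f') (f'' := f'') hs
      (fun x hx => (hf' x hx).continuousAt.continuousWithinAt) ?_ ?_ ?_ <;>
      rw [hso.interior_eq]
    · exact fun x hx => (hf' x hx).hasDerivWithinAt
    · exact fun x hx => (hf'' x hx).hasDerivWithinAt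
    · exact hf''₀

noncomputable def joukowsky (t : ℝ) : ℝ := (t + t⁻¹) / 2

noncomputable def joukowskyDeriv (t : ℝ) : ℝ := (1 - (t ^ 2)⁻¹) / 2

lemma joukowsky_sub_one {t : ℝ} (ht : t ≠ 0) : joukowsky t - 1 = (t - 1) ^ 2 / (2 * t) := by
  unfold joukowsky
  field_simp
  ring

lemma one_le_joukowsky {t : ℝ} (ht : 0 < t) : 1 ≤ joukowsky t := by
  have := joukowsky_sub_one ht.ne'
  have : 0 ≤ (t - 1) ^ 2 / (2 * t) := by positivity
  linarith

lemma one_lt_joukowsky {t : ℝ} (ht : 0 < t) (ht1 : t ≠ 1) : 1 < joukowsky t := by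
  have := joukowsky_sub_one ht.ne'
  have : 0 < (t - 1) ^ 2 / (2 * t) := by have := sub_ne_zero.2 ht1; positivity
  linarith

lemma joukowsky_sq_sub_one {t : ℝ} (ht : t ≠ 0) :
    joukowsky t ^ 2 - 1 = ((t - t⁻¹) / 2) ^ 2 := by
  unfold joukowsky
  field_simp
  ring

lemma joukowsky_add_sqrt {t : ℝ} (ht : 1 ≤ t) :
    joukowsky t + √(joukowsky t ^ 2 - 1) = t := by
  have hinv : t⁻¹ ≤ t := (inv_le_one_of_one_le₀ ht).trans ht
  rw [joukowsky_sq_sub_one (by positivity), Real.sqrt_sq (by linarith), joukowsky]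
  ring

lemma le_joukowsky_add_sqrt {t : ℝ} (ht : t ≠ 0) :
    t ≤ joukowsky t + √(joukowsky t ^ 2 - 1) := by
  rw [joukowsky_sq_sub_one ht, Real.sqrt_sq_eq_abs, joukowsky]
  linarith [le_abs_self ((t - t⁻¹) / 2)]

lemma joukowsky_add_sqrt_sq_sub_one {x : ℝ} (hx : 1 ≤ x) :
    joukowsky (x + √(x ^ 2 - 1)) = x := by
  have hs : √(x ^ 2 - 1) ^ 2 = x ^ 2 - 1 := Real.sq_sqrt (by nlinarith)
  have hinv : (x + √(x ^ 2 - 1))⁻¹ = x - √(x ^ 2 - 1) :=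
    inv_eq_of_mul_eq_one_right (by nlinarith)
  rw [joukowsky, hinv]
  ring

lemma one_lt_add_sqrt_sq_sub_one {x : ℝ} (hx : 1 < x) : 1 < x + √(x ^ 2 - 1) := by
  have : 0 < √(x ^ 2 - 1) := Real.sqrt_pos.2 (by nlinarith)
  linarith

lemma joukowskyDeriv_pos {t : ℝ} (ht : 1 < t) : 0 < joukowskyDeriv t := by
  have : (t ^ 2)⁻¹ < 1 := inv_lt_one_of_one_lt₀ (by nlinarith)
  unfold joukowskyDeriv
  linarith

lemma joukowskyDeriv_one : joukowskyDeriv 1 = 0 := by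
  norm_num [joukowskyDeriv]

lemma hasDerivAt_joukowsky {t : ℝ} (ht : t ≠ 0) : HasDerivAt joukowsky (joukowskyDeriv t) t := by
  refine (((hasDerivAt_id' t).add (hasDerivAt_inv ht)).div_const 2).congr_deriv ?_
  rw [joukowskyDeriv]
  ring

lemma hasDerivAt_joukowskyDeriv {t : ℝ} (ht : t ≠ 0) :
    HasDerivAt joukowskyDeriv ((t ^ 3)⁻¹) t := by
  refine (((hasDerivAt_const t 1).sub ((hasDerivAt_pow 2 t).inv (by positivity))).div_const
    2).congr_deriv ?_
  field_simp
  ring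

lemma second_deriv_comp_joukowsky_eq {t : ℝ} (ht : t ≠ 0) (a b : ℝ) :
    a * joukowskyDeriv t * joukowskyDeriv t + b * (t ^ 3)⁻¹ =
      ((joukowsky t ^ 2 - 1) * t * a + b) / t ^ 3 := by
  unfold joukowsky joukowskyDeriv
  field_simp
  ring

lemma hasDerivAt_comp_joukowsky {f f' : ℝ → ℝ}
    (hf : ∀ x, 1 ≤ x → HasDerivWithinAt f (f' x) (Ici 1) x) {t : ℝ} (ht : 0 < t) :
    HasDerivAt (fun s => f (joukowsky s)) (f' (joukowsky t) * joukowskyDeriv t) t :=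
  ((hf _ (one_le_joukowsky ht)).comp t (hasDerivAt_joukowsky ht.ne').hasDerivWithinAt
    fun _ hs => one_le_joukowsky hs).hasDerivAt (Ioi_mem_nhds ht)

noncomputable def distortionCriterion (Ψ' Ψ'' : ℝ → ℝ) (x t : ℝ) : ℝ :=
  (x ^ 2 - 1) * t * Ψ'' x + Ψ' x

lemma distortionCriterion_one (Ψ' Ψ'' : ℝ → ℝ) (t : ℝ) :
    distortionCriterion Ψ' Ψ'' 1 t = Ψ' 1 := by
  simp [distortionCriterion]

lemma distortionCriterion_nonneg_of_le {Ψ' Ψ'' : ℝ → ℝ} {x t T : ℝ} (hx : 1 ≤ x)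
    (hΨ' : 0 ≤ Ψ' x) (hT : 0 ≤ distortionCriterion Ψ' Ψ'' x T) (ht : 0 ≤ t) (htT : t ≤ T) :
    0 ≤ distortionCriterion Ψ' Ψ'' x t := by
  unfold distortionCriterion at *
  have hx2 : 0 ≤ x ^ 2 - 1 := by nlinarith
  rcases le_total 0 (Ψ'' x) with h | h
  · positivity
  · nlinarith [mul_le_mul_of_nonpos_right (mul_le_mul_of_nonneg_left htT hx2) h]

section Criterion

variable {Ψ Ψ' Ψ'' : ℝ → ℝ}

lemma hasDerivAt_deriv_comp_joukowsky
    (hΨ'' : ∀ x, 1 ≤ x → HasDerivWithinAt Ψ' (Ψ'' x) (Ici 1) x) {t : ℝ} (ht : 0 < t) :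
    HasDerivAt (fun s => Ψ' (joukowsky s) * joukowskyDeriv s)
      (distortionCriterion Ψ' Ψ'' (joukowsky t) t / t ^ 3) t := by
  rw [distortionCriterion, ← second_deriv_comp_joukowsky_eq ht.ne']
  exact (hasDerivAt_comp_joukowsky hΨ'' ht).mul (hasDerivAt_joukowskyDeriv ht.ne')

lemma convexOn_comp_joukowsky_iff
    (hΨ' : ∀ x, 1 ≤ x → HasDerivWithinAt Ψ (Ψ' x) (Ici 1) x)
    (hΨ'' : ∀ x, 1 ≤ x → HasDerivWithinAt Ψ' (Ψ'' x) (Ici 1) x) :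
    ConvexOn ℝ (Ioi 0) (fun t => Ψ (joukowsky t)) ↔
      ∀ t, 0 < t → 0 ≤ distortionCriterion Ψ' Ψ'' (joukowsky t) t := by
  rw [convexOn_iff_forall_nonneg_of_hasDerivAt2 (convex_Ioi 0) isOpen_Ioi
    (fun t ht => hasDerivAt_comp_joukowsky hΨ' ht)
    (fun t ht => hasDerivAt_deriv_comp_joukowsky hΨ'' ht)]
  exact forall₂_congr fun t ht => by
    rw [le_div_iff₀ (pow_pos ht 3), zero_mul]

lemma nonneg_of_distortionCriterion
    (hΨ'' : ∀ x, 1 ≤ x → HasDerivWithinAt Ψ' (Ψ'' x) (Ici 1) x)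
    (hcrit : ∀ x, 1 < x → 0 ≤ distortionCriterion Ψ' Ψ'' x (x + √(x ^ 2 - 1))) {x : ℝ}
    (hx : 1 ≤ x) : 0 ≤ Ψ' x := by
  have hmono : MonotoneOn (fun s => Ψ' (joukowsky s) * joukowskyDeriv s) (Ici 1) := by
    refine monotoneOn_of_hasDerivWithinAt_nonneg (convex_Ici 1)
      (f' := fun t => distortionCriterion Ψ' Ψ'' (joukowsky t) t / t ^ 3)
      (fun t ht => (hasDerivAt_deriv_comp_joukowsky hΨ''
        (one_pos.trans_le ht)).continuousAt.continuousWithinAt) ?_ ?_ <;> rw [interior_Ici]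
    · exact fun t ht => (hasDerivAt_deriv_comp_joukowsky hΨ'' (one_pos.trans ht)).hasDerivWithinAt
    · intro t (ht : 1 < t)
      have := hcrit _ (one_lt_joukowsky (one_pos.trans ht) ht.ne')
      rw [joukowsky_add_sqrt ht.le] at this
      exact div_nonneg this (pow_pos (one_pos.trans ht) 3).le
  have hpos : ∀ x, 1 < x → 0 ≤ Ψ' x := by
    intro x hx
    have hT := one_lt_add_sqrt_sq_sub_one hx
    have hmono1 : Ψ' (joukowsky 1) * joukowskyDeriv 1 ≤
        Ψ' (joukowsky (x + √(x ^ 2 - 1))) * joukowskyDeriv (x + √(x ^ 2 - 1)) :=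
      hmono self_mem_Ici hT.le hT.le
    rw [joukowsky_add_sqrt_sq_sub_one hx.le, joukowskyDeriv_one, mul_zero] at hmono1
    exact nonneg_of_mul_nonneg_left hmono1 (joukowskyDeriv_pos hT)
  rcases hx.eq_or_lt with rfl | hx
  · exact ge_of_tendsto ((hΨ'' 1 le_rfl).continuousWithinAt.mono_left
      (nhdsWithin_mono _ Ioi_subset_Ici_self)) (eventually_nhdsWithin_of_forall hpos)
  · exact hpos x hx

lemma distortionCriterion_joukowsky_nonneg
    (hΨ'' : ∀ x, 1 ≤ x → HasDerivWithinAt Ψ' (Ψ'' x) (Ici 1) x)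
    (hcrit : ∀ x, 1 < x → 0 ≤ distortionCriterion Ψ' Ψ'' x (x + √(x ^ 2 - 1))) {t : ℝ}
    (ht : 0 < t) : 0 ≤ distortionCriterion Ψ' Ψ'' (joukowsky t) t := by
  have hx := one_le_joukowsky ht
  have hΨ'x := nonneg_of_distortionCriterion hΨ'' hcrit hx
  refine distortionCriterion_nonneg_of_le hx hΨ'x ?_ ht.le (le_joukowsky_add_sqrt ht.ne')
  rcases hx.eq_or_lt with hx1 | hx1
  · rwa [← hx1, distortionCriterion_one, hx1]
  · exact hcrit _ hx1

lemma convexOn_comp_joukowsky_iff_distortionCriterion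
    (hΨ' : ∀ x, 1 ≤ x → HasDerivWithinAt Ψ (Ψ' x) (Ici 1) x)
    (hΨ'' : ∀ x, 1 ≤ x → HasDerivWithinAt Ψ' (Ψ'' x) (Ici 1) x) :
    ConvexOn ℝ (Ioi 0) (fun t => Ψ (joukowsky t)) ↔
      ∀ x, 1 < x → 0 ≤ distortionCriterion Ψ' Ψ'' x (x + √(x ^ 2 - 1)) := by
  rw [convexOn_comp_joukowsky_iff hΨ' hΨ'']
  refine ⟨fun hE x hx => ?_, fun hcrit t ht => distortionCriterion_joukowsky_nonneg hΨ'' hcrit ht⟩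
  have := hE _ (one_pos.trans (one_lt_add_sqrt_sq_sub_one hx))
  rwa [joukowsky_add_sqrt_sq_sub_one hx.le] at this

end Criterion

lemma derivWithin_Ici_eventuallyEq_deriv {f : ℝ → ℝ} {a x : ℝ} (hx : a < x) :
    derivWithin f (Ici a) =ᶠ[𝓝 x] deriv f := by
  filter_upwards [Ioi_mem_nhds hx] with y hy
  exact derivWithin_of_mem_nhds (Ici_mem_nhds hy)

/-- For `Ψ : [1,∞) → ℝ` twice continuously differentiable and
`h(t) := Ψ((t + 1/t)/2)`, the function `h` is convex on `(0,∞)` if and only if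
`(x² − 1)(x + √(x² − 1)) Ψ''(x) + Ψ'(x) ≥ 0` for all `x ∈ (1,∞)`. -/
theorem convexity_criterion_in_terms_of_distortion (Ψ : ℝ → ℝ)
    (hΨ : ContDiffOn ℝ 2 Ψ (Set.Ici (1 : ℝ)))
    (h : ℝ → ℝ) (hdef : ∀ t : ℝ, 0 < t → h t = Ψ ((t + t⁻¹) / 2)) :
    ConvexOn ℝ (Set.Ioi (0 : ℝ)) h ↔
      ∀ x : ℝ, 1 < x →
        0 ≤ (x ^ 2 - 1) * (x + Real.sqrt (x ^ 2 - 1)) * deriv (deriv Ψ) x + deriv Ψ x := by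
  have hΨ' (x : ℝ) (hx : 1 ≤ x) : HasDerivWithinAt Ψ (derivWithin Ψ (Ici 1) x) (Ici 1) x :=
    (hΨ.differentiableOn two_ne_zero x hx).hasDerivWithinAt
  have hΨ'' (x : ℝ) (hx : 1 ≤ x) : HasDerivWithinAt (derivWithin Ψ (Ici 1))
      (derivWithin (derivWithin Ψ (Ici 1)) (Ici 1) x) (Ici 1) x :=
    ((hΨ.derivWithin (uniqueDiffOn_Ici 1) (by norm_num)).differentiableOn one_ne_zero x
      hx).hasDerivWithinAt
  have hh : EqOn h (fun t => Ψ (joukowsky t)) (Ioi 0) := hdef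
  have hconv : ConvexOn ℝ (Ioi 0) h ↔ ConvexOn ℝ (Ioi 0) (fun t => Ψ (joukowsky t)) :=
    ⟨fun hc => hc.congr hh, fun hc => hc.congr hh.symm⟩
  rw [hconv, convexOn_comp_joukowsky_iff_distortionCriterion hΨ' hΨ'']
  refine forall₂_congr fun x hx => ?_
  rw [distortionCriterion, derivWithin_of_mem_nhds (Ici_mem_nhds hx),
    (derivWithin_Ici_eventuallyEq_deriv hx).deriv_eq, derivWithin_of_mem_nhds (Ici_mem_nhds hx)]
end

section
/- Let n ≥ 2 and let W : GL⁺(n) → ℝ be conformally invariant and bounded below. Then the rank-one convex envelope RW, defined by RW(F) := sup{w(F) : w : GL⁺(n) → ℝ rank-one convex with w(X) ≤ W(X) for all X ∈ GL⁺(n)}, is conformally invariant, i.e. RW(A F B) = RW(F) for all F ∈ GL⁺(n) and all A, B ∈ CSO(n). -/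
open Matrix MeasureTheory Set

open Matrix

section Aux
variable {n : ℕ}

lemma cso_det_pos (hn : 0 < n) {A : Matrix (Fin n) (Fin n) ℝ} (hA : CSOnN A) : 0 < A.det := by
  obtain ⟨a, ha, R, hR, rfl⟩ := hA
  rw [Matrix.det_smul, hR.2, mul_one]
  simpa using pow_pos ha (Fintype.card (Fin n))

lemma cso_inv {A : Matrix (Fin n) (Fin n) ℝ} (hA : CSOnN A) :
    ∃ A' : Matrix (Fin n) (Fin n) ℝ, CSOnN A' ∧ A' * A = 1 ∧ A * A' = 1 := by
  obtain ⟨a, ha, R, hR, rfl⟩ := hA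
  refine ⟨a⁻¹ • R.transpose, ⟨a⁻¹, inv_pos.mpr ha, R.transpose, ⟨?_, ?_⟩, rfl⟩, ?_, ?_⟩
  · rw [Matrix.transpose_transpose]
    exact (mul_eq_one_comm).mp hR.1
  · rw [Matrix.det_transpose]; exact hR.2
  · rw [Matrix.smul_mul, Matrix.mul_smul, smul_smul, inv_mul_cancel₀ ha.ne', hR.1, one_smul]
  · rw [Matrix.smul_mul, Matrix.mul_smul, smul_smul, mul_inv_cancel₀ ha.ne',
      (mul_eq_one_comm).mp hR.1, one_smul]

lemma roc_conj (hn : 0 < n) {w : Matrix (Fin n) (Fin n) ℝ → ℝ} (hw : RankOneConvexN w)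
    {A B : Matrix (Fin n) (Fin n) ℝ} (hA : CSOnN A) (hB : CSOnN B) :
    RankOneConvexN (fun X => w (A * X * B)) := by
  intro F hF H hH hFH t ht0 ht1
  have hdA := cso_det_pos hn hA
  have hdB := cso_det_pos hn hB
  have hdet : ∀ X : Matrix (Fin n) (Fin n) ℝ, 0 < X.det → 0 < (A * X * B).det := by
    intro X hX
    rw [Matrix.det_mul, Matrix.det_mul]
    positivity
  have hkey : ∀ s : ℝ, A * (F + s • H) * B = A * F * B + s • (A * H * B) := by
    intro s
    rw [Matrix.mul_add, Matrix.add_mul, Matrix.mul_smul, Matrix.smul_mul]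
  have hrank : (A * H * B).rank = 1 := by
    rw [Matrix.rank_mul_eq_left_of_isUnit_det _ _ (isUnit_iff_ne_zero.mpr hdB.ne'),
      Matrix.rank_mul_eq_right_of_isUnit_det _ _ (isUnit_iff_ne_zero.mpr hdA.ne'), hH]
  have hkey1 : A * (F + H) * B = A * F * B + A * H * B := by simpa using hkey 1
  have h1 := hw (A * F * B) (hdet F hF) (A * H * B) hrank
    (hkey1 ▸ hdet _ hFH) t ht0 ht1
  rw [← hkey t, ← hkey1] at h1
  exact h1

lemma env_set_subset (hn : 0 < n) {W : Matrix (Fin n) (Fin n) ℝ → ℝ} (hW : ConfInvN W)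
    {F A B : Matrix (Fin n) (Fin n) ℝ} (hF : 0 < F.det) (hA : CSOnN A) (hB : CSOnN B) :
    {y | ∃ w : Matrix (Fin n) (Fin n) ℝ → ℝ, RankOneConvexN w ∧
      (∀ X : Matrix (Fin n) (Fin n) ℝ, 0 < X.det → w X ≤ W X) ∧ y = w (A * F * B)} ⊆
    {y | ∃ w : Matrix (Fin n) (Fin n) ℝ → ℝ, RankOneConvexN w ∧
      (∀ X : Matrix (Fin n) (Fin n) ℝ, 0 < X.det → w X ≤ W X) ∧ y = w F} := by
  rintro y ⟨w, hroc, hle, rfl⟩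
  refine ⟨fun X => w (A * X * B), roc_conj hn hroc hA hB, ?_, rfl⟩
  intro X hX
  calc w (A * X * B) ≤ W (A * X * B) := hle _ (by
        rw [Matrix.det_mul, Matrix.det_mul]
        have := cso_det_pos hn hA; have := cso_det_pos hn hB; positivity)
    _ = W X := hW X hX A B hA hB

end Aux


/-- The rank-one convex envelope of a conformally invariant energy on
GL⁺(n), `n ≥ 2`, bounded below, is conformally invariant. -/
theorem rank_one_convex_envelope_conformally_invariant (n : ℕ) (hn : 2 ≤ n)
    (W : Matrix (Fin n) (Fin n) ℝ → ℝ) (hW : ConfInvN W)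
    (hbd : ∃ C : ℝ, ∀ F : Matrix (Fin n) (Fin n) ℝ, 0 < F.det → C ≤ W F) :
    ConfInvN (RWenvN W) := by
  have hn0 : 0 < n := by omega
  intro F hF A B hA hB
  unfold RWenvN
  congr 1
  apply Set.Subset.antisymm
  · exact env_set_subset hn0 hW hF hA hB
  · obtain ⟨A', hA', hA'A, hAA'⟩ := cso_inv hA
    obtain ⟨B', hB', hB'B, hBB'⟩ := cso_inv hB
    have hAFB : 0 < (A * F * B).det := by
      rw [Matrix.det_mul, Matrix.det_mul]
      have := cso_det_pos hn0 hA; have := cso_det_pos hn0 hB; positivity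
    have hkey : A' * (A * F * B) * B' = F := by
      rw [← Matrix.mul_assoc, ← Matrix.mul_assoc, hA'A, Matrix.one_mul,
        Matrix.mul_assoc, hBB', Matrix.mul_one]
    have := env_set_subset hn0 hW hAFB hA' hB'
    rwa [hkey] at this
end

section
/- Let n ≥ 2 and let W : GL⁺(n) → ℝ be conformally invariant and bounded below. Then the quasiconvex envelope QW, defined by QW(F) := sup{w(F) : w : GL⁺(n) → ℝ quasiconvex with w(X) ≤ W(X) for all X ∈ GL⁺(n)}, is conformally invariant, i.e. QW(A F B) = QW(F) for all F ∈ GL⁺(n) and all A, B ∈ CSO(n). -/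
open Matrix MeasureTheory Set

noncomputable section

/-! For `A, B` with positive determinant, `X ↦ w (A * X * B)` is quasiconvex whenever `w` is: a test
field `ϑ` on `Ω` is traded for `y ↦ A ϑ (B y)` on `B⁻¹ Ω`, whose gradient is `A (∇ϑ ∘ B) B`, and the
linear change of variables scales both sides of the quasiconvexity inequality by `(det B)⁻¹`.
For `A, B ∈ CSO(n)` and conformally invariant `W` this maps quasiconvex minorants of `W` to
quasiconvex minorants, so the values of minorants at `A F B` are among those at `F`; with `A⁻¹, B⁻¹`
the two sets coincide, and so do their suprema. -/

section ConformalGroup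

variable {n : ℕ} {A : Matrix (Fin n) (Fin n) ℝ}

lemma CSOnN.det_pos (hA : CSOnN A) : 0 < A.det := by
  obtain ⟨a, ha, R, hR, rfl⟩ := hA
  rw [det_smul, hR.2, mul_one]
  positivity

lemma CSOnN.inv (hA : CSOnN A) : CSOnN A⁻¹ := by
  obtain ⟨a, ha, R, ⟨hRR, hdet⟩, rfl⟩ := hA
  refine ⟨a⁻¹, inv_pos.mpr ha, Rᵀ, ⟨?_, by rwa [det_transpose]⟩, inv_eq_left_inv ?_⟩
  · rw [transpose_transpose]
    exact mul_eq_one_comm.mp hRR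
  · rw [smul_mul_smul_comm, inv_mul_cancel₀ ha.ne', hRR, one_smul]

end ConformalGroup

section ChangeOfVariables

variable {E G : Type*} [NormedAddCommGroup E] [NormedSpace ℝ E] [MeasurableSpace E]
  [BorelSpace E] [FiniteDimensional ℝ E] [NormedAddCommGroup G] [NormedSpace ℝ G]
  (μ : Measure E) [μ.IsAddHaarMeasure]

lemma setIntegral_preimage_continuousLinearEquiv (e : E ≃L[ℝ] E) (g : E → G) (s : Set E) :
    ∫ x in e ⁻¹' s, g (e x) ∂μ = |(LinearMap.det (e : E →ₗ[ℝ] E))⁻¹| • ∫ x in s, g x ∂μ := by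
  have hdet : LinearMap.det (e : E →ₗ[ℝ] E) ≠ 0 := (LinearEquiv.isUnit_det' _).ne_zero
  have hmap : Measure.map e μ = ENNReal.ofReal |(LinearMap.det (e : E →ₗ[ℝ] E))⁻¹| • μ :=
    Measure.map_linearMap_addHaar_eq_smul_addHaar μ hdet
  calc ∫ x in e ⁻¹' s, g (e x) ∂μ = ∫ x in s, g x ∂Measure.map e μ :=
        (setIntegral_map_equiv e.toHomeomorph.toMeasurableEquiv g s).symm
    _ = |(LinearMap.det (e : E →ₗ[ℝ] E))⁻¹| • ∫ x in s, g x ∂μ := by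
      rw [hmap, Measure.restrict_smul, integral_smul_measure,
        ENNReal.toReal_ofReal (abs_nonneg _)]

end ChangeOfVariables

section Gradient

variable {n : ℕ}

lemma gradMatN_eq_toMatrix' (ϑ : (Fin n → ℝ) → (Fin n → ℝ)) (x : Fin n → ℝ) :
    gradMatN ϑ x = LinearMap.toMatrix' (fderiv ℝ ϑ x : (Fin n → ℝ) →ₗ[ℝ] Fin n → ℝ) := by
  ext i j
  simp [gradMatN, LinearMap.toMatrix'_apply]

lemma gradMatN_continuousLinearMap_comp_comp (L₁ L₂ : (Fin n → ℝ) →L[ℝ] (Fin n → ℝ))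
    {ϑ : (Fin n → ℝ) → (Fin n → ℝ)} (hϑ : Differentiable ℝ ϑ) (y : Fin n → ℝ) :
    gradMatN (fun y => L₁ (ϑ (L₂ y))) y =
      LinearMap.toMatrix' (L₁ : (Fin n → ℝ) →ₗ[ℝ] Fin n → ℝ) * gradMatN ϑ (L₂ y) *
        LinearMap.toMatrix' (L₂ : (Fin n → ℝ) →ₗ[ℝ] Fin n → ℝ) := by
  have hψ : HasFDerivAt (fun y => L₁ (ϑ (L₂ y))) (L₁ ∘L fderiv ℝ ϑ (L₂ y) ∘L L₂) y :=
    L₁.hasFDerivAt.comp y ((hϑ _).hasFDerivAt.comp y L₂.hasFDerivAt)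
  rw [gradMatN_eq_toMatrix', hψ.fderiv, gradMatN_eq_toMatrix']
  simp [LinearMap.toMatrix'_comp, Matrix.mul_assoc]

lemma QuasiconvexN.comp_mul_mul {w : Matrix (Fin n) (Fin n) ℝ → ℝ} (hw : QuasiconvexN w)
    {A B : Matrix (Fin n) (Fin n) ℝ} (hA : 0 < A.det) (hB : 0 < B.det) :
    QuasiconvexN (fun X => w (A * X * B)) := by
  intro Ω hΩ hΩb F₀ hF₀ ϑ hϑ hϑc hϑΩ hϑdet
  let LA := LinearMap.toContinuousLinearMap (toLin' A)
  let e : (Fin n → ℝ) ≃L[ℝ] (Fin n → ℝ) :=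
    (LinearMap.toContinuousLinearMap (toLin' B)).toContinuousLinearEquivOfDetNeZero
      (by simpa using hB.ne')
  have hLA : LinearMap.toMatrix' (LA : (Fin n → ℝ) →ₗ[ℝ] Fin n → ℝ) = A :=
    LinearMap.toMatrix'_toLin' A
  have he : LinearMap.toMatrix' ((e : (Fin n → ℝ) →L[ℝ] Fin n → ℝ) : (Fin n → ℝ) →ₗ[ℝ] _) = B :=
    LinearMap.toMatrix'_toLin' B
  have he_det : LinearMap.det (e : (Fin n → ℝ) →ₗ[ℝ] Fin n → ℝ) = B.det :=
    LinearMap.det_toLin' B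
  let ψ : (Fin n → ℝ) → (Fin n → ℝ) := fun y => LA (ϑ (e y))
  have hψ_grad : ∀ y, A * F₀ * B + gradMatN ψ y = A * (F₀ + gradMatN ϑ (e y)) * B := fun y => by
    have h := gradMatN_continuousLinearMap_comp_comp LA (e : (Fin n → ℝ) →L[ℝ] Fin n → ℝ)
      (hϑ.differentiable (by simp)) y
    rw [ContinuousLinearEquiv.coe_coe, hLA, he] at h
    rw [h, Matrix.mul_add, Matrix.add_mul]
  have hψ_supp : tsupport ψ ⊆ e ⁻¹' Ω :=
    calc tsupport ψ ⊆ tsupport (ϑ ∘ e) := tsupport_comp_subset (map_zero LA) _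
      _ = e ⁻¹' tsupport ϑ := tsupport_comp_eq_preimage ϑ e.toHomeomorph
      _ ⊆ e ⁻¹' Ω := preimage_mono hϑΩ
  have key := hw (e ⁻¹' Ω) (hΩ.preimage e.continuous) (e.antilipschitz.isBounded_preimage hΩb)
    (A * F₀ * B) (by rw [det_mul, det_mul]; positivity) ψ
    (LA.contDiff.comp (hϑ.comp e.contDiff))
    ((hϑc.comp_homeomorph e.toHomeomorph).comp_left (map_zero LA)) hψ_supp
    (fun y hy => by rw [hψ_grad, det_mul, det_mul]; have := hϑdet _ hy; positivity)
  have hvol : volume (e ⁻¹' Ω) =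
      ENNReal.ofReal |(LinearMap.det (e : (Fin n → ℝ) →ₗ[ℝ] Fin n → ℝ))⁻¹| * volume Ω :=
    Measure.addHaar_preimage_linearMap volume (by rw [he_det]; exact hB.ne') Ω
  simp only [hψ_grad] at key
  rw [setIntegral_preimage_continuousLinearEquiv volume e
      (fun x => w (A * (F₀ + gradMatN ϑ x) * B)), hvol, he_det, ENNReal.toReal_mul,
    ENNReal.toReal_ofReal (abs_nonneg _), abs_inv, abs_of_pos hB, smul_eq_mul,
    mul_left_comm] at key
  exact le_of_mul_le_mul_left key (inv_pos.mpr hB)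

end Gradient

section Envelope

variable {n : ℕ}

def quasiconvexMinorantValues (W : Matrix (Fin n) (Fin n) ℝ → ℝ) (F : Matrix (Fin n) (Fin n) ℝ) :
    Set ℝ :=
  {y | ∃ w : Matrix (Fin n) (Fin n) ℝ → ℝ, QuasiconvexN w ∧
    (∀ X : Matrix (Fin n) (Fin n) ℝ, 0 < X.det → w X ≤ W X) ∧ y = w F}

lemma quasiconvexMinorantValues_mul_subset {W : Matrix (Fin n) (Fin n) ℝ → ℝ} (hW : ConfInvN W)
    {A B : Matrix (Fin n) (Fin n) ℝ} (hA : CSOnN A) (hB : CSOnN B) (F : Matrix (Fin n) (Fin n) ℝ) :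
    quasiconvexMinorantValues W (A * F * B) ⊆ quasiconvexMinorantValues W F := by
  rintro _ ⟨w, hw, hwW, rfl⟩
  refine ⟨fun X => w (A * X * B), hw.comp_mul_mul hA.det_pos hB.det_pos, fun X hX => ?_, rfl⟩
  have hAXB : 0 < (A * X * B).det := by
    rw [det_mul, det_mul]
    exact mul_pos (mul_pos hA.det_pos hX) hB.det_pos
  exact (hwW _ hAXB).trans_eq (hW X hX A B hA hB)

end Envelope

theorem quasiconvex_envelope_conformally_invariant_general (n : ℕ)
    (W : Matrix (Fin n) (Fin n) ℝ → ℝ) (hW : ConfInvN W) :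
    ConfInvN (QWenvN W) := by
  intro F _ A B hA hB
  change sSup (quasiconvexMinorantValues W (A * F * B)) = sSup (quasiconvexMinorantValues W F)
  congr 1
  refine (quasiconvexMinorantValues_mul_subset hW hA hB F).antisymm ?_
  have hF : A⁻¹ * (A * F * B) * B⁻¹ = F := by
    rw [Matrix.mul_assoc, mul_nonsing_inv_cancel_right _ _ hB.det_pos.ne'.isUnit,
      nonsing_inv_mul_cancel_left _ _ hA.det_pos.ne'.isUnit]
  simpa only [hF] using quasiconvexMinorantValues_mul_subset hW hA.inv hB.inv (A * F * B)

/-- The quasiconvex envelope of a conformally invariant energy on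
GL⁺(n), `n ≥ 2`, bounded below, is conformally invariant. -/
theorem quasiconvex_envelope_conformally_invariant (n : ℕ) (hn : 2 ≤ n)
    (W : Matrix (Fin n) (Fin n) ℝ → ℝ) (hW : ConfInvN W)
    (hbd : ∃ C : ℝ, ∀ F : Matrix (Fin n) (Fin n) ℝ, 0 < F.det → C ≤ W F) :
    ConfInvN (QWenvN W) :=
  quasiconvex_envelope_conformally_invariant_general n W hW
end
end

section
/- Let W : GL⁺(2) → ℝ be the linear distortion, W(F) := K(F) = λ₁/λ₂, where λ₁ ≥ λ₂ are the ordered singular values of F. Then: (a) W is polyconvex; (b) W(F) = Ψ(𝕂(F)) for all F ∈ GL⁺(2), where Ψ : [1,∞) → ℝ, Ψ(x) := x + √(x² − 1); and (c) Ψ is not convex on [1,∞). In particular, a conformally invariant energy W(F) = Ψ(𝕂(F)) can be polyconvex without Ψ being convex, disproving Adamowicz's conjecture in dimension two. -/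
open Matrix MeasureTheory Set

/-! `λ₁ / λ₂ = λ₁² / det F`, and `λ₁` is a convex function of `F`: writing `F` as
`z ↦ F⁺ z + F⁻ z̄` on `ℂ = ℝ²`, the singular values are `|F⁺| ± |F⁻|`. As the perspective
`(x, δ) ↦ x² / δ` is jointly convex for `δ > 0` and nondecreasing in `x ≥ 0`, the function
`P(F, δ) = λ₁(F)² / δ` (`+∞` for `δ ≤ 0`) is convex. With `r = λ₁ / λ₂ ≥ 1` one has
`𝕂 = (r + r⁻¹) / 2`, which inverts to `r = Ψ(𝕂)`. Finally `Ψ` is not convex because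
`√(x² - 1)` leaves `x = 1` with infinite slope. -/

lemma mul_add_mul_sq_div_le {a b x y u v : ℝ} (ha : 0 ≤ a) (hb : 0 ≤ b) (hab : a + b = 1)
    (hu : 0 < u) (hv : 0 < v) :
    (a * x + b * y) ^ 2 / (a * u + b * v) ≤ a * (x ^ 2 / u) + b * (y ^ 2 / v) := by
  have hD : 0 < a * u + b * v := by
    rcases ha.eq_or_lt with rfl | ha
    · simp_all
    · positivity
  rw [div_le_iff₀ hD, mul_div_assoc', mul_div_assoc', div_add_div _ _ hu.ne' hv.ne',
    div_mul_eq_mul_div, le_div_iff₀ (by positivity)]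
  nlinarith [mul_nonneg (mul_nonneg ha hb) (sq_nonneg (x * v - y * u))]

theorem ConvexOn.sq_div_snd {E : Type*} [AddCommGroup E] [Module ℝ E] {g : E → ℝ}
    (hg : ConvexOn ℝ univ g) (hg0 : ∀ x, 0 ≤ g x) :
    ConvexOn ℝ {p : E × ℝ | 0 < p.2} (fun p => g p.1 ^ 2 / p.2) := by
  refine ⟨convex_halfSpace_gt (LinearMap.snd ℝ E ℝ).isLinear 0, ?_⟩
  rintro ⟨x, u⟩ (hu : 0 < u) ⟨y, v⟩ (hv : 0 < v) a b ha hb hab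
  simp only [Prod.smul_mk, Prod.mk_add_mk, smul_eq_mul]
  calc g (a • x + b • y) ^ 2 / (a * u + b * v)
      ≤ (a * g x + b * g y) ^ 2 / (a * u + b * v) := by
        gcongr
        · exact hg0 _
        · exact hg.2 trivial trivial ha hb hab
    _ ≤ a * (g x ^ 2 / u) + b * (g y ^ 2 / v) := mul_add_mul_sq_div_le ha hb hab hu hv

section ExtendByTop

variable {E : Type*}

open Classical in
noncomputable def extendByTop (s : Set E) (f : E → ℝ) (x : E) : EReal :=
  if x ∈ s then f x else ⊤

variable {s : Set E}

lemma extendByTop_of_mem (f : E → ℝ) {x : E} (hx : x ∈ s) : extendByTop s f x = f x :=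
  if_pos hx

lemma extendByTop_of_notMem (f : E → ℝ) {x : E} (hx : x ∉ s) : extendByTop s f x = ⊤ :=
  if_neg hx

lemma extendByTop_ne_bot (f : E → ℝ) (x : E) : extendByTop s f x ≠ ⊥ := by
  by_cases hx : x ∈ s
  · simp [extendByTop_of_mem f hx]
  · simp [extendByTop_of_notMem f hx]

lemma EReal.coe_mul_ne_bot {t : ℝ} (ht : 0 ≤ t) {e : EReal} (he : e ≠ ⊥) :
    (t : EReal) * e ≠ ⊥ := by
  simp [EReal.mul_ne_bot, ht, he]

theorem ConvexOn.extendByTop_le [AddCommGroup E] [Module ℝ E] {f : E → ℝ}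
    (hf : ConvexOn ℝ s f) (x y : E) {t : ℝ} (ht0 : 0 ≤ t) (ht1 : t ≤ 1) :
    extendByTop s f (t • x + (1 - t) • y) ≤
      (t : EReal) * extendByTop s f x + ((1 - t : ℝ) : EReal) * extendByTop s f y := by
  by_cases hx : x ∈ s
  · by_cases hy : y ∈ s
    · rw [extendByTop_of_mem f hx, extendByTop_of_mem f hy,
        extendByTop_of_mem f (hf.1 hx hy ht0 (sub_nonneg.2 ht1) (add_sub_cancel t 1))]
      exact_mod_cast hf.2 hx hy ht0 (sub_nonneg.2 ht1) (add_sub_cancel t 1)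
    · rcases ht1.eq_or_lt with rfl | ht1
      · simp
      · rw [extendByTop_of_notMem f hy, EReal.coe_mul_top_of_pos (sub_pos.2 ht1),
          EReal.add_top_of_ne_bot (EReal.coe_mul_ne_bot ht0 (extendByTop_ne_bot f x))]
        exact le_top
  · rcases ht0.eq_or_lt with rfl | ht0
    · simp
    · rw [extendByTop_of_notMem f hx, EReal.coe_mul_top_of_pos ht0, EReal.top_add_of_ne_bot
        (EReal.coe_mul_ne_bot (sub_nonneg.2 ht1) (extendByTop_ne_bot f y))]
      exact le_top

end ExtendByTop

lemma half_add_inv_add_sqrt_sq_sub_one {r : ℝ} (hr : 1 ≤ r) :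
    (r + r⁻¹) / 2 + √(((r + r⁻¹) / 2) ^ 2 - 1) = r := by
  have hsq : ((r + r⁻¹) / 2) ^ 2 - 1 = ((r - r⁻¹) / 2) ^ 2 := by
    field_simp
    ring
  have hinv : r⁻¹ ≤ r := (inv_le_one_of_one_le₀ hr).trans hr
  rw [hsq, Real.sqrt_sq (by linarith)]
  ring

lemma not_convexOn_add_sqrt_sq_sub_one :
    ¬ ConvexOn ℝ (Ici (1 : ℝ)) (fun x : ℝ => x + √(x ^ 2 - 1)) := by
  intro h
  have hmid := h.2 (show (1 : ℝ) ∈ Ici 1 by norm_num) (show (2 : ℝ) ∈ Ici 1 by norm_num)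
    (by norm_num : (0 : ℝ) ≤ 1 / 2) (by norm_num : (0 : ℝ) ≤ 1 / 2) (by norm_num)
  norm_num at hmid
  have : √3 < √5 := Real.sqrt_lt_sqrt (by norm_num) (by norm_num)
  linarith

-- These are `2 F⁺` and `2 F⁻`.
def conformalPart : Mat2 →ₗ[ℝ] ℂ where
  toFun F := ⟨F 0 0 + F 1 1, F 1 0 - F 0 1⟩
  map_add' F G := by apply Complex.ext <;> simp <;> ring
  map_smul' c F := by apply Complex.ext <;> simp <;> ring

def anticonformalPart : Mat2 →ₗ[ℝ] ℂ where
  toFun F := ⟨F 0 0 - F 1 1, F 1 0 + F 0 1⟩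
  map_add' F G := by apply Complex.ext <;> simp <;> ring
  map_smul' c F := by apply Complex.ext <;> simp <;> ring

lemma frobSq_fin_two (F : Mat2) : frobSq F = F 0 0 ^ 2 + F 0 1 ^ 2 + F 1 0 ^ 2 + F 1 1 ^ 2 := by
  simp only [frobSq, Fin.sum_univ_two]
  ring

lemma norm_conformalPart_sq (F : Mat2) : ‖conformalPart F‖ ^ 2 = frobSq F + 2 * F.det := by
  rw [Complex.sq_norm, frobSq_fin_two, det_fin_two]
  simp only [conformalPart, LinearMap.coe_mk, AddHom.coe_mk, Complex.normSq_mk]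
  ring

lemma norm_anticonformalPart_sq (F : Mat2) :
    ‖anticonformalPart F‖ ^ 2 = frobSq F - 2 * F.det := by
  rw [Complex.sq_norm, frobSq_fin_two, det_fin_two]
  simp only [anticonformalPart, LinearMap.coe_mk, AddHom.coe_mk, Complex.normSq_mk]
  ring

lemma sqrt_frobSq_sq_sub_four_mul_det_sq (F : Mat2) :
    √(frobSq F ^ 2 - 4 * F.det ^ 2) = ‖conformalPart F‖ * ‖anticonformalPart F‖ := by
  rw [← Real.sqrt_sq (by positivity : 0 ≤ ‖conformalPart F‖ * ‖anticonformalPart F‖), mul_pow,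
    norm_conformalPart_sq, norm_anticonformalPart_sq]
  ring_nf

lemma sv1_eq (F : Mat2) : sv1 F = (‖conformalPart F‖ + ‖anticonformalPart F‖) / 2 := by
  rw [sv1, sqrt_frobSq_sq_sub_four_mul_det_sq, ← Real.sqrt_sq (by positivity :
    0 ≤ (‖conformalPart F‖ + ‖anticonformalPart F‖) / 2)]
  congr 1
  linear_combination -(norm_conformalPart_sq F + norm_anticonformalPart_sq F) / 4

lemma sv2_eq (F : Mat2) (hF : 0 ≤ F.det) :
    sv2 F = (‖conformalPart F‖ - ‖anticonformalPart F‖) / 2 := by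
  have hle : ‖anticonformalPart F‖ ≤ ‖conformalPart F‖ := by
    rw [← sq_le_sq₀ (norm_nonneg _) (norm_nonneg _), norm_conformalPart_sq,
      norm_anticonformalPart_sq]
    linarith
  rw [sv2, sqrt_frobSq_sq_sub_four_mul_det_sq, ← Real.sqrt_sq (by linarith :
    0 ≤ (‖conformalPart F‖ - ‖anticonformalPart F‖) / 2)]
  congr 1
  linear_combination -(norm_conformalPart_sq F + norm_anticonformalPart_sq F) / 4

lemma convexOn_sv1 : ConvexOn ℝ univ sv1 := by
  have hnorm : ConvexOn ℝ univ (‖·‖ : ℂ → ℝ) := convexOn_norm convex_univ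
  have h := ((hnorm.comp_linearMap conformalPart).add
    (hnorm.comp_linearMap anticonformalPart)).smul (c := 1 / 2) (by norm_num)
  rw [preimage_univ] at h
  refine h.congr fun F _ => ?_
  simp only [sv1_eq, Pi.add_apply, Function.comp_apply, smul_eq_mul]
  ring

lemma sv1_mul_sv2 (F : Mat2) (hF : 0 ≤ F.det) : sv1 F * sv2 F = F.det := by
  rw [sv1_eq, sv2_eq F hF]
  linear_combination (norm_conformalPart_sq F - norm_anticonformalPart_sq F) / 4

lemma ordSingVals_sv1_sv2 (F : Mat2) (hF : 0 < F.det) : OrdSingVals F (sv1 F) (sv2 F) := by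
  have hmul := sv1_mul_sv2 F hF.le
  have hpos : 0 < sv1 F * sv2 F := hmul ▸ hF
  refine ⟨⟨pos_of_mul_pos_left hpos (Real.sqrt_nonneg _),
    pos_of_mul_pos_right hpos (Real.sqrt_nonneg _), hmul, ?_⟩, ?_⟩
  · rw [sv1_eq, sv2_eq F hF.le]
    linear_combination (norm_conformalPart_sq F + norm_anticonformalPart_sq F) / 2
  · rw [sv1_eq, sv2_eq F hF.le]
    linarith [norm_nonneg (anticonformalPart F)]

lemma sv1_div_sv2 (F : Mat2) (hF : 0 < F.det) : sv1 F / sv2 F = sv1 F ^ 2 / F.det := by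
  have hsv2 : sv2 F ≠ 0 := (ordSingVals_sv1_sv2 F hF).1.2.1.ne'
  rw [← sv1_mul_sv2 F hF.le]
  field_simp

lemma Kdist_eq_of_singVals {F : Mat2} {l1 l2 : ℝ} (h : SingVals F l1 l2) :
    Kdist F = (l1 / l2 + (l1 / l2)⁻¹) / 2 := by
  obtain ⟨hl1, hl2, hdet, hfrob⟩ := h
  rw [Kdist, ← hdet, ← hfrob]
  field_simp

/-- The linear distortion `W(F) = K(F) = λ₁/λ₂` is polyconvex, equals
`Ψ(𝕂(F))` with `Ψ(x) = x + √(x² − 1)`, and `Ψ` is not convex on `[1,∞)`: a polyconvex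
conformally invariant energy whose representation in terms of the distortion `𝕂` is not
convex. -/
theorem linear_distortion_polyconvex_but_Psi_not_convex :
    Polyconvex (fun F : Mat2 => sv1 F / sv2 F) ∧
      (∀ F : Mat2, 0 < F.det →
        sv1 F / sv2 F = Kdist F + Real.sqrt ((Kdist F) ^ 2 - 1)) ∧
      ¬ ConvexOn ℝ (Set.Ici (1 : ℝ)) (fun x : ℝ => x + Real.sqrt (x ^ 2 - 1)) := by
  have hP : ConvexOn ℝ {p : Mat2 × ℝ | 0 < p.2} (fun p => sv1 p.1 ^ 2 / p.2) :=
    convexOn_sv1.sq_div_snd fun _ => Real.sqrt_nonneg _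
  refine ⟨⟨extendByTop {p | 0 < p.2} (fun p : Mat2 × ℝ => sv1 p.1 ^ 2 / p.2),
      fun X Y t ht0 ht1 => hP.extendByTop_le X Y ht0 ht1, fun F hF => ?_⟩,
    fun F hF => ?_, not_convexOn_add_sqrt_sq_sub_one⟩
  · rw [extendByTop_of_mem _ (show (F, F.det) ∈ {p : Mat2 × ℝ | 0 < p.2} from hF)]
    exact congrArg _ (sv1_div_sv2 F hF)
  · obtain ⟨hsv, hle⟩ := ordSingVals_sv1_sv2 F hF
    rw [Kdist_eq_of_singVals hsv, half_add_inv_add_sqrt_sq_sub_one]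
    exact (one_le_div hsv.2.1).2 hle
end

section
/- Let W : GL⁺(2) → ℝ be conformally invariant and bounded below, and define the convex envelope CW(F) := sup{w(F) : w : ℝ^{2×2} → ℝ convex with w(G) ≤ W(G) for all G ∈ GL⁺(2)}. Then CW is constant: CW(F) = inf{W(G) : G ∈ GL⁺(2)} for all F ∈ GL⁺(2). -/
open Matrix MeasureTheory Set

/-- The convex envelope of `W : GL⁺(2) → ℝ`, taken with respect to convex functions defined
on all of `ℝ^{2×2}`. -/
noncomputable def CWenv (W : Mat2 → ℝ) (F : Mat2) : ℝ :=
  sSup {y | ∃ w : Mat2 → ℝ, ConvexOn ℝ Set.univ w ∧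
    (∀ G : Mat2, 0 < G.det → w G ≤ W G) ∧ y = w F}

lemma CSO2_smul_one {c : ℝ} (hc : 0 < c) : CSO2 (c • (1 : Mat2)) :=
  ⟨c, hc, 1, ⟨by simp, by simp⟩, rfl⟩

lemma confinv_smul {W : Mat2 → ℝ} (hW : ConfInv W) {X : Mat2} (hX : 0 < X.det)
    {c : ℝ} (hc : 0 < c) : W (c • X) = W X := by
  have hone : CSO2 (1 : Mat2) := by simpa using CSO2_smul_one (one_pos)
  have h := hW X hX (c • (1 : Mat2)) 1 (CSO2_smul_one hc) hone
  simpa [Matrix.smul_mul] using h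

lemma det_sub_smul (F G : Mat2) (c : ℝ) :
    (F - c • G).det = F.det
      - c * (F 0 0 * G 1 1 + F 1 1 * G 0 0 - F 0 1 * G 1 0 - F 1 0 * G 0 1)
      + c ^ 2 * G.det := by
  simp [Matrix.det_fin_two, Matrix.sub_apply, Matrix.smul_apply, smul_eq_mul]
  ring

/-- Key lemma: any convex minorant of a conformally invariant energy is everywhere at most
each value of the energy. -/
lemma key_le {W : Mat2 → ℝ} (hW : ConfInv W) {w : Mat2 → ℝ}
    (hw : ConvexOn ℝ Set.univ w) (hle : ∀ G : Mat2, 0 < G.det → w G ≤ W G)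
    {F : Mat2} (hF : 0 < F.det) {G : Mat2} (hG : 0 < G.det) : w F ≤ W G := by
  set a : ℝ := F.det with ha
  set b : ℝ := F 0 0 * G 1 1 + F 1 1 * G 0 0 - F 0 1 * G 1 0 - F 1 0 * G 0 1 with hb
  set c : ℝ := max 1 ((|b| + |a| + 1) / G.det) with hcdef
  have hc1 : (1 : ℝ) ≤ c := le_max_left _ _
  have hc0 : (0 : ℝ) < c := lt_of_lt_of_le one_pos hc1
  have hc2 : |b| + |a| + 1 ≤ G.det * c := by
    have h := le_max_right 1 ((|b| + |a| + 1) / G.det)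
    calc |b| + |a| + 1 = ((|b| + |a| + 1) / G.det) * G.det := by
          field_simp
      _ ≤ c * G.det := by
          apply mul_le_mul_of_nonneg_right _ hG.le
          exact h.trans (le_of_eq rfl)
      _ = G.det * c := mul_comm _ _
  set B : Mat2 := F - c • G with hBdef
  have hBdet : 0 < B.det := by
    rw [hBdef, det_sub_smul]
    have h1 : c * b ≤ c * |b| := mul_le_mul_of_nonneg_left (le_abs_self b) hc0.le
    have h2 : c * (|b| + |a| + 1) ≤ c * (G.det * c) :=
      mul_le_mul_of_nonneg_left hc2 hc0.le
    have h3 : |a| ≤ c * |a| := le_mul_of_one_le_left (abs_nonneg a) hc1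
    have h4 : a ≥ -|a| := neg_abs_le a
    nlinarith
  -- the convex combination
  have hcomb : ∀ s : ℝ, 0 < s → s < 1 → w F ≤ (1 - s) * W G + s * W B := by
    intro s hs0 hs1
    have hs1' : (0 : ℝ) < 1 - s := by linarith
    have heq : (1 - s) • ((c / (1 - s)) • G) + s • ((1 / s) • B) = F := by
      rw [smul_smul, smul_smul]
      have e1 : (1 - s) * (c / (1 - s)) = c := by field_simp
      have e2 : s * (1 / s) = 1 := by field_simp
      rw [e1, e2, one_smul, hBdef]
      abel
    have hdet1 : 0 < ((c / (1 - s)) • G).det := by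
      rw [Matrix.det_smul]
      have : (0 : ℝ) < c / (1 - s) := div_pos hc0 hs1'
      positivity
    have hdet2 : 0 < ((1 / s) • B).det := by
      rw [Matrix.det_smul]
      have : (0 : ℝ) < 1 / s := by positivity
      positivity
    have hconv := hw.2 (mem_univ ((c / (1 - s)) • G)) (mem_univ ((1 / s) • B))
      hs1'.le hs0.le (by ring)
    rw [heq] at hconv
    have hWG : W ((c / (1 - s)) • G) = W G := confinv_smul hW hG (div_pos hc0 hs1')
    have hWB : W ((1 / s) • B) = W B := confinv_smul hW hBdet (by positivity)
    have l1 : w ((c / (1 - s)) • G) ≤ W G := (hle _ hdet1).trans_eq hWG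
    have l2 : w ((1 / s) • B) ≤ W B := (hle _ hdet2).trans_eq hWB
    calc w F ≤ (1 - s) * w ((c / (1 - s)) • G) + s * w ((1 / s) • B) := hconv
      _ ≤ (1 - s) * W G + s * W B := by
          apply add_le_add
          · exact mul_le_mul_of_nonneg_left l1 hs1'.le
          · exact mul_le_mul_of_nonneg_left l2 hs0.le
  -- take s → 0
  refine le_of_forall_pos_le_add ?_
  intro ε hε
  set d : ℝ := W B - W G with hd
  set s : ℝ := min (1/2) (ε / (|d| + 1)) with hsdef
  have hs0 : 0 < s := lt_min (by norm_num) (by positivity)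
  have hs1 : s < 1 := lt_of_le_of_lt (min_le_left _ _) (by norm_num)
  have h := hcomb s hs0 hs1
  have hsd : s * d ≤ ε := by
    have h1 : s * d ≤ s * |d| := mul_le_mul_of_nonneg_left (le_abs_self d) hs0.le
    have h2 : s ≤ ε / (|d| + 1) := min_le_right _ _
    have h3 : s * (|d| + 1) ≤ ε := by
      rw [← div_mul_cancel₀ ε (show |d| + 1 ≠ 0 by positivity)]
      exact mul_le_mul_of_nonneg_right h2 (by positivity)
    nlinarith [abs_nonneg d]
  have : (1 - s) * W G + s * W B = W G + s * d := by rw [hd]; ring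
  linarith [h, hsd, this ▸ h]

/-- The convex envelope of a conformally invariant, bounded-below energy on
GL⁺(2) is constant, equal to the infimum of the energy. -/
theorem convex_envelope_constant (W : Mat2 → ℝ) (hW : ConfInv W)
    (hbd : ∃ C : ℝ, ∀ F : Mat2, 0 < F.det → C ≤ W F) :
    ∀ F : Mat2, 0 < F.det →
      CWenv W F = sInf {y | ∃ G : Mat2, 0 < G.det ∧ y = W G} := by
  intro F hF
  obtain ⟨C, hC⟩ := hbd
  set Iset : Set ℝ := {y | ∃ G : Mat2, 0 < G.det ∧ y = W G} with hIset
  have hIne : Iset.Nonempty := ⟨W F, F, hF, rfl⟩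
  have hIbd : BddBelow Iset := ⟨C, by rintro y ⟨G, hG, rfl⟩; exact hC G hG⟩
  set m : ℝ := sInf Iset with hm
  set Sset : Set ℝ := {y | ∃ w : Mat2 → ℝ, ConvexOn ℝ Set.univ w ∧
    (∀ G : Mat2, 0 < G.det → w G ≤ W G) ∧ y = w F} with hSset
  have hmem : m ∈ Sset := by
    refine ⟨fun _ => m, convexOn_const m convex_univ, ?_, rfl⟩
    intro G hG
    exact csInf_le hIbd ⟨G, hG, rfl⟩
  have hub : ∀ y ∈ Sset, y ≤ m := by
    rintro y ⟨w, hw, hle, rfl⟩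
    refine le_csInf hIne ?_
    rintro z ⟨G, hG, rfl⟩
    exact key_le hW hw hle hF hG
  have : CWenv W F = sSup Sset := rfl
  rw [this]
  exact le_antisymm (csSup_le ⟨m, hmem⟩ hub) (le_csSup ⟨m, hub⟩ hmem)
end
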